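/- Let μ satisfy Assumption 1 and let t > 1. Then: (i) Re ω_t'(z) ≥ 1/2 for every z ∈ ℂ⁺; (ii) the function E ↦ Re ω_t(E) is strictly increasing on ℝ; (iii) ω_t is a homeomorphism from ℂ⁺ ∪ ℝ onto its image; (iv) ω_t restricted to (ℂ⁺ ∪ ℝ) \ supp(μ^{⊞t}) is biholomorphic onto its image (it extends analytically through every real point outside supp(μ^{⊞t}) and is injective there). -/

import Mathlib

open MeasureTheory Topology Filter Set

noncomputable section

/-- The open upper half-plane ℂ⁺. -/
def UHP : Set ℂ := {z : ℂ | 0 < z.im}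

/-- The closed upper half-plane ℂ⁺ ∪ ℝ. -/
def CUHP : Set ℂ := {z : ℂ | 0 ≤ z.im}

/-- Cauchy–Stieltjes transform `m_μ(z) = ∫ 1/(x−z) dμ(x)`. -/
def stT (μ : Measure ℝ) (z : ℂ) : ℂ := ∫ x, ((x : ℂ) - z)⁻¹ ∂μ

/-- Real-valued Cauchy–Stieltjes transform at real points (outside the support). -/
def stTR (μ : Measure ℝ) (E : ℝ) : ℝ := ∫ x, (x - E)⁻¹ ∂μ

/-- Negative reciprocal Cauchy–Stieltjes transform `F_μ = −1/m_μ`. -/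
def nrT (μ : Measure ℝ) (z : ℂ) : ℂ := -(stT μ z)⁻¹

/-- Support of a Borel measure on ℝ (the smallest closed set of full measure). -/
def msupp (μ : Measure ℝ) : Set ℝ := {x : ℝ | ∀ ε > 0, 0 < μ (Set.Ioo (x - ε) (x + ε))}

/-- Absolutely continuous part of μ with respect to Lebesgue measure. -/
def acPart (μ : Measure ℝ) : Measure ℝ := volume.withDensity (μ.rnDeriv volume)

/-- `I_μ(ω) = ∫ 1/|x−ω|² dμ(x)`. -/
def Ifun (μ : Measure ℝ) (w : ℂ) : ℝ := ∫ x, (Complex.normSq ((x : ℂ) - w))⁻¹ ∂μ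

/-- A sequence of the upper half-plane converging non-tangentially to `E ∈ ℝ`. -/
def NonTangentialSeq (z : ℕ → ℂ) (E : ℝ) : Prop :=
  (∀ n, z n ∈ UHP) ∧ Tendsto z atTop (𝓝 (E : ℂ)) ∧
    ∃ C : ℝ, ∀ n, |(z n).re - E| ≤ C * (z n).im

/-- The density `ρ_μ` of the a.c. part of `μ` vanishes at `x`
(via the Stieltjes inversion formula). -/
def densityVanishesAt (μ : Measure ℝ) (x : ℝ) : Prop :=
  Tendsto (fun η : ℝ => (stT μ ((x : ℂ) + (η : ℂ) * Complex.I)).im) (𝓝[>] 0) (𝓝 0)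

/-- The density `ρ_μ` of the a.c. part of `μ` diverges at `x`. -/
def densityDivergesAt (μ : Measure ℝ) (x : ℝ) : Prop :=
  Tendsto (fun η : ℝ => (stT μ ((x : ℂ) + (η : ℂ) * Complex.I)).im) (𝓝[>] 0) atTop

/-- Assumption 1. -/
structure Assumption1 (μ : Measure ℝ) (nac npp nppout : ℕ)
    (Em Ep : Fin nac → ℝ) (atom : Fin npp → ℝ) (ρ : ℝ → ℝ) : Prop where
  prob : IsProbabilityMeasure μ
  compact : IsCompact (msupp μ)
  nac_pos : 1 ≤ nac
  npp_pos : 1 ≤ npp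
  ρ_nonneg : ∀ x, 0 ≤ ρ x
  ac_density : acPart μ = volume.withDensity fun x => ENNReal.ofReal (ρ x)
  sing_atomic : μ.singularPart volume = ∑ j : Fin npp, μ {atom j} • Measure.dirac (atom j)
  atom_inj : Function.Injective atom
  atom_pos : ∀ j, 0 < μ {atom j}
  lt : ∀ j, Em j < Ep j
  ordered : ∀ i j : Fin nac, i < j → Ep i < Em j
  supp_ac : msupp (acPart μ) = ⋃ j, Set.Icc (Em j) (Ep j)
  out_card : Nat.card {j : Fin npp // atom j ∉ msupp (acPart μ)} = nppout
  no_atom_endpoint : ∀ j i, atom j ≠ Em i ∧ atom j ≠ Ep i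
  power_law : ∀ j, ∃ tm tp C : ℝ, -1 < tm ∧ tm < 1 ∧ -1 < tp ∧ tp < 1 ∧ 1 ≤ C ∧
    ∀ᵐ x ∂volume, x ∈ Set.Icc (Em j) (Ep j) →
      C⁻¹ < ρ x / ((x - Em j) ^ tm * (Ep j - x) ^ tp) ∧
      ρ x / ((x - Em j) ^ tm * (Ep j - x) ^ tp) < C

/-- The subordination function `ω_t` for the free convolution semi-group,
together with its continuous extension to `ℂ⁺ ∪ ℝ`. -/
structure IsSubordT (μ : Measure ℝ) (t : ℝ) (ω : ℂ → ℂ) : Prop where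
  diff : DifferentiableOn ℂ ω UHP
  maps : ∀ z ∈ UHP, ω z ∈ UHP
  imLe : ∀ z ∈ UHP, z.im ≤ (ω z).im
  limTop : Tendsto (fun η : ℝ => ω ((η : ℂ) * Complex.I) / ((η : ℂ) * Complex.I))
      atTop (𝓝 1)
  eqn : ∀ z ∈ UHP, (t : ℂ) * ω z - z = ((t : ℂ) - 1) * nrT μ (ω z)
  cont : ContinuousOn ω CUHP

/-- `μt = μ^{⊞ t}`: the probability measure whose negative reciprocal Cauchy–Stieltjes
transform is `F_μ ∘ ω_t`, i.e. whose Cauchy–Stieltjes transform is `m_μ ∘ ω_t`. -/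
def IsFreePow (μ : Measure ℝ) (ω : ℂ → ℂ) (μt : Measure ℝ) : Prop :=
  IsProbabilityMeasure μt ∧ ∀ z ∈ UHP, stT μt z = stT μ (ω z)

/-- Assumption 2 (for one of the two measures). -/
structure Assumption2 (μ : Measure ℝ) (n : ℕ) (Am Ap : Fin n → ℝ) (ρ : ℝ → ℝ) : Prop where
  prob : IsProbabilityMeasure μ
  n_pos : 1 ≤ n
  centered : ∫ x, x ∂μ = 0
  ρ_nonneg : ∀ x, 0 ≤ ρ x
  ac : μ = volume.withDensity fun x => ENNReal.ofReal (ρ x)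
  lt : ∀ j, Am j < Ap j
  ordered : ∀ i j : Fin n, i < j → Ap i < Am j
  supp_eq : msupp μ = ⋃ j, Set.Icc (Am j) (Ap j)
  power_law : ∀ j, ∃ sm sp C : ℝ, -1 < sm ∧ sm < 1 ∧ -1 < sp ∧ sp < 1 ∧ 1 ≤ C ∧
    ∀ᵐ x ∂volume, x ∈ Set.Icc (Am j) (Ap j) →
      C⁻¹ < ρ x / ((x - Am j) ^ sm * (Ap j - x) ^ sp) ∧
      ρ x / ((x - Am j) ^ sm * (Ap j - x) ^ sp) < C

/-- The pair of subordination functions for the free additive convolution `μa ⊞ μb`. -/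
structure IsSubordPair (μa μb : Measure ℝ) (ωa ωb : ℂ → ℂ) : Prop where
  diff_a : DifferentiableOn ℂ ωa UHP
  diff_b : DifferentiableOn ℂ ωb UHP
  maps_a : ∀ z ∈ UHP, ωa z ∈ UHP
  maps_b : ∀ z ∈ UHP, ωb z ∈ UHP
  imLe_a : ∀ z ∈ UHP, z.im ≤ (ωa z).im
  imLe_b : ∀ z ∈ UHP, z.im ≤ (ωb z).im
  lim_a : Tendsto (fun η : ℝ => ωa ((η : ℂ) * Complex.I) / ((η : ℂ) * Complex.I))
      atTop (𝓝 1)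
  lim_b : Tendsto (fun η : ℝ => ωb ((η : ℂ) * Complex.I) / ((η : ℂ) * Complex.I))
      atTop (𝓝 1)
  eqn_a : ∀ z ∈ UHP, ωa z + ωb z - z = nrT μa (ωb z)
  eqn_b : ∀ z ∈ UHP, ωa z + ωb z - z = nrT μb (ωa z)

/-- `μab = μa ⊞ μb`: the probability measure whose negative reciprocal Cauchy–Stieltjes
transform is `F_{μa} ∘ ω_b`, i.e. whose Cauchy–Stieltjes transform is `m_{μa} ∘ ω_b`. -/
def IsFreeConv (μa μb : Measure ℝ) (ωb : ℂ → ℂ) (μab : Measure ℝ) : Prop :=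
  IsProbabilityMeasure μab ∧ ∀ z ∈ UHP, stT μab z = stT μa (ωb z)

/-- `Ω` is the continuous extension of `ω` to `ℂ⁺ ∪ ℝ`, with values in the
Riemann sphere `ℂ ∪ {∞}`. -/
def ExtendsToRP (ω : ℂ → ℂ) (Ω : ℂ → OnePoint ℂ) : Prop :=
  ContinuousOn Ω CUHP ∧ ∀ z ∈ UHP, Ω z = (ω z : OnePoint ℂ)

/-- `μhat` is the measure in the Nevanlinna representation
`F_μ(ω) − ω = −∫ x dμ + ∫ 1/(x−ω) dμ̂(x)`. -/
def IsNevanHat (μ μhat : Measure ℝ) : Prop :=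
  IsFiniteMeasure μhat ∧ ∀ z ∈ UHP,
    nrT μ z - z = -((∫ x, x ∂μ : ℝ) : ℂ) + ∫ x, ((x : ℂ) - z)⁻¹ ∂μhat

end

/-!
With `h := F_μ - id`, Cauchy–Schwarz gives `Im F_μ(w) ≥ Im w`, so `h` maps `ℂ⁺` into its closure.
Differentiating `ω = z + (t - 1) h(ω)` gives `ω' = 1 / (1 - d)` with `d = (t - 1) h'(ω)`, and the
Schwarz–Pick bound `|h'(ω)| Im ω ≤ Im h(ω) = (Im ω - Im z) / (t - 1)` forces `|d| < 1`, whence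
`Re ω' ≥ 1/2`. Integrating along segments, `Re ((ω z - ω w) conj (z - w)) ≥ |z - w|² / 2` on `ℂ⁺`,
and by continuity on `ℂ⁺ ∪ ℝ`: this gives monotonicity on `ℝ` and a `2`-Lipschitz inverse of `ω`.
Finally `F_{μ^{⊞t}} = F_μ ∘ ω` turns the subordination equation into
`ω(z) = (z + (t - 1) F_{μ^{⊞t}}(z)) / t`, whose right-hand side is analytic off `supp μ^{⊞t}`.
-/

open Complex ComplexConjugate Metric

section StieltjesTransform

variable {ν : Measure ℝ} {z : ℂ} {δ : ℝ}

lemma isOpen_UHP : IsOpen UHP := isOpen_lt continuous_const continuous_im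

lemma closure_UHP : closure UHP = CUHP := closure_setOfPred_lt_im 0

lemma UHP_subset_CUHP : UHP ⊆ CUHP := fun _ hz => le_of_lt (α := ℝ) hz

lemma abs_im_le_norm_ofReal_sub (x : ℝ) (z : ℂ) : |z.im| ≤ ‖(x : ℂ) - z‖ := by
  simpa using abs_im_le_norm ((x : ℂ) - z)

lemma integrable_inv_ofReal_sub [IsFiniteMeasure ν] (hδ : 0 < δ)
    (h : ∀ᵐ x : ℝ ∂ν, δ ≤ ‖(x : ℂ) - z‖) : Integrable (fun x : ℝ => ((x : ℂ) - z)⁻¹) ν := by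
  refine (integrable_const δ⁻¹).mono' (by fun_prop) ?_
  filter_upwards [h] with x hx
  rw [norm_inv]
  exact inv_anti₀ hδ hx

lemma ae_im_le_norm_ofReal_sub (z : ℂ) : ∀ᵐ x : ℝ ∂ν, z.im ≤ ‖(x : ℂ) - z‖ :=
  ae_of_all _ fun x => (le_abs_self _).trans (abs_im_le_norm_ofReal_sub x z)

lemma hasDerivAt_stT [IsFiniteMeasure ν] (hδ : 0 < δ) (h : ∀ᵐ x : ℝ ∂ν, δ ≤ ‖(x : ℂ) - z‖) :
    HasDerivAt (stT ν) (∫ x, (((x : ℂ) - z) ^ 2)⁻¹ ∂ν) z := by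
  have hfar : ∀ᵐ x : ℝ ∂ν, ∀ z' ∈ ball z (δ / 2), δ / 2 ≤ ‖(x : ℂ) - z'‖ := by
    filter_upwards [h] with x hx z' hz'
    have hz'z : ‖z' - z‖ < δ / 2 := by rwa [← dist_eq_norm]
    have := norm_sub_norm_le ((x : ℂ) - z) (z' - z)
    rw [sub_sub_sub_cancel_right] at this
    linarith
  refine (hasDerivAt_integral_of_dominated_loc_of_deriv_le
    (F := fun z' (x : ℝ) => ((x : ℂ) - z')⁻¹) (F' := fun z' (x : ℝ) => (((x : ℂ) - z') ^ 2)⁻¹)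
    (bound := fun _ => ((δ / 2) ^ 2)⁻¹)
    (ball_mem_nhds z (half_pos hδ)) (Eventually.of_forall fun _ => by fun_prop)
    (integrable_inv_ofReal_sub hδ h) (by fun_prop) ?_ (integrable_const _) ?_).2
  · filter_upwards [hfar] with x hx z' hz'
    rw [norm_inv, norm_pow]
    exact inv_anti₀ (by positivity) (pow_le_pow_left₀ (by positivity) (hx z' hz') 2)
  · filter_upwards [hfar] with x hx z' hz'
    have hne : (x : ℂ) - z' ≠ 0 := norm_pos_iff.1 ((half_pos hδ).trans_le (hx z' hz'))
    exact (((hasDerivAt_id' z').const_sub (x : ℂ)).inv hne).congr_deriv (by simp)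

lemma differentiableOn_stT_UHP [IsFiniteMeasure ν] : DifferentiableOn ℂ (stT ν) UHP :=
  fun z hz =>
    (hasDerivAt_stT hz (ae_im_le_norm_ofReal_sub z)).differentiableAt.differentiableWithinAt

end StieltjesTransform

section StieltjesTransformIm

variable {ν : Measure ℝ} [IsFiniteMeasure ν] {z : ℂ}

lemma integrable_inv_normSq_ofReal_sub (hz : z ∈ UHP) :
    Integrable (fun x : ℝ => (normSq ((x : ℂ) - z))⁻¹) ν := by
  refine (integrable_const (z.im ^ 2)⁻¹).mono' (by fun_prop) (ae_of_all _ fun x => ?_)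
  rw [Real.norm_of_nonneg (inv_nonneg.2 (normSq_nonneg _)), normSq_eq_norm_sq]
  exact inv_anti₀ (pow_pos hz 2) (pow_le_pow_left₀ hz.le ((le_abs_self _).trans
    (abs_im_le_norm_ofReal_sub x z)) 2)

lemma im_stT (hz : z ∈ UHP) : (stT ν z).im = z.im * Ifun ν z := by
  rw [stT, Ifun, ← integral_const_mul, ← RCLike.im_eq_complex_im,
    ← integral_im (integrable_inv_ofReal_sub hz (ae_im_le_norm_ofReal_sub z))]
  congr 1 with x
  simp [div_eq_mul_inv]

lemma Ifun_pos [NeZero ν] (hz : z ∈ UHP) : 0 < Ifun ν z := by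
  have hpos : ∀ x : ℝ, 0 < (normSq ((x : ℂ) - z))⁻¹ := fun x =>
    inv_pos.2 (normSq_pos.2 fun h => by simpa [(show 0 < z.im from hz).ne'] using congrArg im h)
  rw [Ifun, integral_pos_iff_support_of_nonneg (fun x => (hpos x).le)
    (integrable_inv_normSq_ofReal_sub hz), Function.support_eq_univ fun x => (hpos x).ne']
  exact Measure.measure_univ_pos.2 (NeZero.ne ν)

lemma stT_ne_zero [NeZero ν] (hz : z ∈ UHP) : stT ν z ≠ 0 := fun h => by
  have := im_stT (ν := ν) hz
  rw [h, zero_im] at this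
  exact (mul_pos hz (Ifun_pos hz)).ne this

lemma normSq_stT_le_Ifun [IsProbabilityMeasure ν] (hz : z ∈ UHP) :
    normSq (stT ν z) ≤ Ifun ν z := by
  set g : ℝ → ℝ := fun x => ‖((x : ℂ) - z)⁻¹‖
  have hg : MemLp g 2 ν := by
    refine MemLp.of_bound (by fun_prop) z.im⁻¹ (ae_of_all _ fun x => ?_)
    rw [norm_norm, norm_inv]
    exact inv_anti₀ hz ((le_abs_self _).trans (abs_im_le_norm_ofReal_sub x z))
  have hg_sq : (g ^ 2) = fun x : ℝ => (normSq ((x : ℂ) - z))⁻¹ := by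
    ext x; simp [g, normSq_eq_norm_sq]
  have hcs : (∫ x, g x ∂ν) ^ 2 ≤ Ifun ν z := by
    have := ProbabilityTheory.variance_nonneg g ν
    rw [ProbabilityTheory.variance_eq_sub hg, hg_sq] at this
    rw [Ifun]; linarith
  calc normSq (stT ν z) = ‖stT ν z‖ ^ 2 := normSq_eq_norm_sq _
    _ ≤ (∫ x, g x ∂ν) ^ 2 := pow_le_pow_left₀ (norm_nonneg _) (norm_integral_le_integral_norm _) 2
    _ ≤ Ifun ν z := hcs

lemma im_le_im_nrT [IsProbabilityMeasure ν] (hz : z ∈ UHP) : z.im ≤ (nrT ν z).im := by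
  have hm : 0 < normSq (stT ν z) := normSq_pos.2 (stT_ne_zero hz)
  rw [nrT, neg_im, inv_im, neg_div, neg_neg, im_stT hz, le_div_iff₀ hm]
  exact mul_le_mul_of_nonneg_left (normSq_stT_le_Ifun hz) hz.le

lemma differentiableOn_nrT_UHP [NeZero ν] : DifferentiableOn ℂ (nrT ν) UHP :=
  fun z hz => ((differentiableOn_stT_UHP z hz).inv (stT_ne_zero hz)).neg

end StieltjesTransformIm

section RealSupport

lemma msupp_eq_support (ν : Measure ℝ) : msupp ν = ν.support := by
  ext x
  exact ((nhds_basis_Ioo_pos x).mem_measureSupport).symm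

def complexSupp (ν : Measure ℝ) : Set ℂ := {z : ℂ | z.im = 0 ∧ z.re ∈ msupp ν}

variable {ν : Measure ℝ}

lemma isClosed_complexSupp : IsClosed (complexSupp ν) :=
  (isClosed_singleton.preimage continuous_im).inter
    ((msupp_eq_support ν ▸ Measure.isClosed_support).preimage continuous_re)

lemma exists_ball_le_norm_ofReal_sub {w : ℂ} (hw : w ∉ complexSupp ν) :
    ∃ δ > 0, ∀ z ∈ ball w δ, ∀ᵐ x : ℝ ∂ν, δ ≤ ‖(x : ℂ) - z‖ := by
  obtain ⟨r, hr, hball⟩ := Metric.isOpen_iff.1 isClosed_complexSupp.isOpen_compl w hw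
  refine ⟨r / 2, half_pos hr, fun z hz => ?_⟩
  filter_upwards [msupp_eq_support ν ▸ Measure.support_mem_ae (μ := ν)] with x hx
  have hxw : r ≤ ‖(x : ℂ) - w‖ := by
    by_contra! h
    exact hball (mem_ball_iff_norm.2 h) ⟨by simp, by simpa using hx⟩
  have := norm_sub_norm_le ((x : ℂ) - w) (z - w)
  rw [sub_sub_sub_cancel_right] at this
  linarith [mem_ball_iff_norm.1 hz]

lemma analyticAt_stT [IsFiniteMeasure ν] {w : ℂ} (hw : w ∉ complexSupp ν) :
    AnalyticAt ℂ (stT ν) w := by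
  obtain ⟨δ, hδ, hfar⟩ := exists_ball_le_norm_ofReal_sub hw
  exact DifferentiableOn.analyticAt (fun z hz => (hasDerivAt_stT hδ (hfar z hz)).differentiableAt
    |>.differentiableWithinAt) (ball_mem_nhds w hδ)

end RealSupport

section SchwarzPick

/-- For `w ∈ ℂ⁺`, a Möbius map of the unit disk onto `ℂ⁺` sending `0` to `w`. -/
noncomputable def diskToUHP (w u : ℂ) : ℂ := (w - conj w * u) / (1 - u)

/-- For `b ∈ ℂ⁺`, a Möbius map of `ℂ⁺` onto the unit disk sending `b` to `0`. -/
noncomputable def uhpToDisk (b v : ℂ) : ℂ := (v - b) / (v - conj b)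

variable {w b u v : ℂ}

lemma norm_sub_conj (hw : w ∈ UHP) : ‖w - conj w‖ = 2 * w.im := by
  rw [sub_conj, norm_mul, norm_real, norm_I, mul_one, Real.norm_of_nonneg (by linarith [hw.out])]

lemma sub_conj_ne_zero (hb : b ∈ UHP) (hv : v ∈ UHP) : v - conj b ≠ 0 := fun h => by
  have := congrArg im h
  simp only [sub_im, conj_im, sub_neg_eq_add, zero_im] at this
  linarith [hb.out, hv.out]

lemma one_sub_ne_zero_of_mem_ball (hu : u ∈ ball (0 : ℂ) 1) : 1 - u ≠ 0 := fun h => by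
  simp [sub_eq_zero.1 h |>.symm] at hu

lemma diskToUHP_mem (hw : w ∈ UHP) (hu : u ∈ ball (0 : ℂ) 1) : diskToUHP w u ∈ UHP := by
  have hu' : normSq u < 1 := by
    rw [normSq_eq_norm_sq]; nlinarith [mem_ball_zero_iff.1 hu, norm_nonneg u]
  have him : (w - conj w * u).im * (1 - u).re - (w - conj w * u).re * (1 - u).im
      = w.im * (1 - normSq u) := by
    simp only [sub_im, sub_re, mul_im, mul_re, conj_re, conj_im, one_re, one_im, normSq_apply]
    ring
  show 0 < (diskToUHP w u).im
  rw [diskToUHP, div_im, div_sub_div_same, him]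
  exact div_pos (mul_pos hw (by linarith)) (normSq_pos.2 (one_sub_ne_zero_of_mem_ball hu))

lemma uhpToDisk_mem (hb : b ∈ UHP) (hv : v ∈ UHP) : uhpToDisk b v ∈ ball (0 : ℂ) 1 := by
  have hlt : normSq (v - b) < normSq (v - conj b) := by
    simp only [normSq_apply, sub_re, sub_im, conj_re, conj_im]
    nlinarith [hb.out, hv.out]
  rw [mem_ball_zero_iff, uhpToDisk, norm_div, div_lt_one (norm_pos_iff.2 (sub_conj_ne_zero hb hv))]
  simpa only [normSq_eq_norm_sq, sq_lt_sq₀ (norm_nonneg _) (norm_nonneg _)] using hlt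

lemma differentiableOn_diskToUHP : DifferentiableOn ℂ (diskToUHP w) (ball 0 1) :=
  fun _ hu => ((differentiableAt_id.const_mul _).const_sub _ |>.div
    (differentiableAt_id.const_sub _) (one_sub_ne_zero_of_mem_ball hu)).differentiableWithinAt

lemma differentiableOn_uhpToDisk (hb : b ∈ UHP) : DifferentiableOn ℂ (uhpToDisk b) UHP :=
  fun _ hv => (DifferentiableAt.div (differentiableAt_id.sub_const b)
    (differentiableAt_id.sub_const (conj b)) (sub_conj_ne_zero hb hv)).differentiableWithinAt

lemma hasDerivAt_diskToUHP_zero : HasDerivAt (diskToUHP w) (w - conj w) 0 := by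
  have := ((hasDerivAt_id' (0 : ℂ)).const_mul (conj w)).const_sub w |>.div
    ((hasDerivAt_id' (0 : ℂ)).const_sub 1) (by norm_num)
  exact this.congr_deriv (by ring)

lemma hasDerivAt_uhpToDisk_self (hb : b ∈ UHP) : HasDerivAt (uhpToDisk b) (b - conj b)⁻¹ b := by
  have := ((hasDerivAt_id' b).sub_const b).div ((hasDerivAt_id' b).sub_const (conj b))
    (sub_conj_ne_zero hb hb)
  exact this.congr_deriv (by field_simp [sub_conj_ne_zero hb hb]; ring)

lemma norm_deriv_mul_im_le_im_of_mapsTo {h : ℂ → ℂ} (hd : DifferentiableOn ℂ h UHP)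
    (hmaps : MapsTo h UHP UHP) (hw : w ∈ UHP) : ‖deriv h w‖ * w.im ≤ (h w).im := by
  have hb : h w ∈ UHP := hmaps hw
  set G : ℂ → ℂ := uhpToDisk (h w) ∘ h ∘ diskToUHP w
  have hG0 : G 0 = 0 := by simp [G, diskToUHP, uhpToDisk]
  have hGd : DifferentiableOn ℂ G (ball 0 1) :=
    (differentiableOn_uhpToDisk hb).comp (hd.comp differentiableOn_diskToUHP
      fun _ hu => diskToUHP_mem hw hu) fun _ hu => hmaps (diskToUHP_mem hw hu)
  have hGmaps : MapsTo G (ball 0 1) (closedBall (G 0) 1) := fun _ hu => by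
    rw [hG0]
    exact ball_subset_closedBall (uhpToDisk_mem hb (hmaps (diskToUHP_mem hw hu)))
  have hG' : HasDerivAt G ((h w - conj (h w))⁻¹ * (deriv h w * (w - conj w))) 0 := by
    have hh : HasDerivAt h (deriv h w) (diskToUHP w 0) := by
      rw [show diskToUHP w 0 = w by simp [diskToUHP]]
      exact (hd.differentiableAt (isOpen_UHP.mem_nhds hw)).hasDerivAt
    have hψ : HasDerivAt (uhpToDisk (h w)) (h w - conj (h w))⁻¹ (h (diskToUHP w 0)) := by
      rw [show diskToUHP w 0 = w by simp [diskToUHP]]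
      exact hasDerivAt_uhpToDisk_self hb
    exact hψ.comp 0 (hh.comp 0 hasDerivAt_diskToUHP_zero)
  have hschwarz := Complex.norm_deriv_le_div_of_mapsTo_ball hGd hGmaps one_pos
  rw [hG'.deriv, norm_mul, norm_mul, norm_inv, norm_sub_conj hb, norm_sub_conj hw, div_one,
    inv_mul_le_iff₀ (by linarith [hb.out])] at hschwarz
  linarith

lemma norm_deriv_mul_im_le_im {h : ℂ → ℂ} (hd : DifferentiableOn ℂ h UHP)
    (hmaps : ∀ z ∈ UHP, 0 ≤ (h z).im) (hw : w ∈ UHP) : ‖deriv h w‖ * w.im ≤ (h w).im := by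
  refine le_of_forall_pos_le_add fun ε hε => ?_
  have hmaps' : MapsTo (fun z => h z + ε * I) UHP UHP := fun z hz => by
    simpa [UHP] using add_pos_of_nonneg_of_pos (hmaps z hz) hε
  have hshift := norm_deriv_mul_im_le_im_of_mapsTo (hd.add_const _) hmaps' hw
  simpa only [deriv_add_const, add_im, mul_I_im, ofReal_re] using hshift

end SchwarzPick

section ReDerivLowerBound

variable {U : Set ℂ} {f : ℂ → ℂ} {c : ℝ}

lemma mul_normSq_le_re_mul_conj (hU : Convex ℝ U) (hUo : IsOpen U)
    (hf : DifferentiableOn ℂ f U) (hc : ∀ z ∈ U, c ≤ (deriv f z).re) {z w : ℂ}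
    (hz : z ∈ U) (hw : w ∈ U) : c * normSq (z - w) ≤ ((f z - f w) * conj (z - w)).re := by
  set g : ℝ → ℝ := fun s => (f (w + s * (z - w)) * conj (z - w)).re
  have hseg : ∀ s ∈ Icc (0 : ℝ) 1, w + s * (z - w) ∈ U := fun s hs => by
    simpa [real_smul] using hU.add_smul_sub_mem hw hz hs
  have hg : ∀ s ∈ Icc (0 : ℝ) 1,
      HasDerivAt g ((deriv f (w + s * (z - w))).re * normSq (z - w)) s := by
    intro s hs
    have hfs := (hf.differentiableAt (hUo.mem_nhds (hseg s hs))).hasDerivAt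
    have hline : HasDerivAt (fun y : ℂ => w + y * (z - w)) (z - w) s := by
      simpa using ((hasDerivAt_id' (s : ℂ)).mul_const (z - w)).const_add w
    exact ((hfs.comp (s : ℂ) hline).mul_const (conj (z - w))).real_of_complex.congr_deriv
      (by rw [mul_assoc, mul_conj, re_mul_ofReal])
  have hmono := (convex_Icc (0 : ℝ) 1).mul_sub_le_image_sub_of_le_deriv
    (fun s hs => (hg s hs).continuousAt.continuousWithinAt)
    (fun s hs => (hg s (interior_subset hs)).differentiableAt.differentiableWithinAt)
    (fun s hs => by
      rw [(hg s (interior_subset hs)).deriv]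
      exact mul_le_mul_of_nonneg_right (hc _ (hseg s (interior_subset hs))) (normSq_nonneg _))
    0 (left_mem_Icc.2 zero_le_one) 1 (right_mem_Icc.2 zero_le_one) zero_le_one
  simpa [g, sub_mul] using hmono

lemma mul_normSq_le_re_mul_conj_of_mem_closure (hU : Convex ℝ U) (hUo : IsOpen U)
    (hf : DifferentiableOn ℂ f U) (hc : ∀ z ∈ U, c ≤ (deriv f z).re)
    (hfc : ContinuousOn f (closure U)) {z w : ℂ} (hz : z ∈ closure U) (hw : w ∈ closure U) :
    c * normSq (z - w) ≤ ((f z - f w) * conj (z - w)).re := by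
  set S : Set (ℂ × ℂ) := {p ∈ closure U ×ˢ closure U |
    c * normSq (p.1 - p.2) ≤ ((f p.1 - f p.2) * conj (p.1 - p.2)).re}
  have hclosed : IsClosed S := by
    have hf₁ : ContinuousOn (fun p : ℂ × ℂ => f p.1) (closure U ×ˢ closure U) :=
      hfc.comp continuousOn_fst fun _ hp => hp.1
    have hf₂ : ContinuousOn (fun p : ℂ × ℂ => f p.2) (closure U ×ˢ closure U) :=
      hfc.comp continuousOn_snd fun _ hp => hp.2
    exact (isClosed_closure.prod isClosed_closure).isClosed_le (by fun_prop)
      (continuous_re.comp_continuousOn ((hf₁.sub hf₂).mul (by fun_prop)))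
  have hsub : closure (U ×ˢ U) ⊆ S := closure_minimal (fun p hp =>
    ⟨⟨subset_closure hp.1, subset_closure hp.2⟩,
      mul_normSq_le_re_mul_conj hU hUo hf hc hp.1 hp.2⟩) hclosed
  rw [closure_prod_eq] at hsub
  exact (hsub (mk_mem_prod hz hw)).2

lemma mul_norm_sub_le_of_le_re_mul_conj {z w : ℂ}
    (h : c * normSq (z - w) ≤ ((f z - f w) * conj (z - w)).re) :
    c * ‖z - w‖ ≤ ‖f z - f w‖ := by
  rcases eq_or_ne z w with rfl | hzw
  · simp
  have hpos : 0 < ‖z - w‖ := norm_pos_iff.2 (sub_ne_zero.2 hzw)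
  have hre := (re_le_norm ((f z - f w) * conj (z - w))).trans_eq
    (by rw [norm_mul, RCLike.norm_conj])
  rw [normSq_eq_norm_sq] at h
  nlinarith

lemma strictMono_re_of_le_re_mul_conj (hc : 0 < c)
    (h : ∀ E E' : ℝ, c * normSq ((E' : ℂ) - E) ≤ ((f E' - f E) * conj ((E' : ℂ) - E)).re) :
    StrictMono fun E : ℝ => (f E).re := by
  intro E E' hEE'
  have := h E E'
  rw [← ofReal_sub, conj_ofReal, normSq_ofReal, re_mul_ofReal, sub_re] at this
  have hd := sub_pos.2 hEE'
  by_contra! hle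
  linarith [mul_pos hc (mul_pos hd hd), mul_nonpos_of_nonpos_of_nonneg (sub_nonpos.2 hle) hd.le]

end ReDerivLowerBound

lemma exists_homeomorph_image_of_antilipschitzWith {X Y : Type*} [MetricSpace X]
    [MetricSpace Y] {s : Set X} {f : X → Y} {K : NNReal} (hf : ContinuousOn f s)
    (hK : AntilipschitzWith K (s.domRestrict f)) :
    ∃ e : s ≃ₜ f '' s, ∀ z : s, (e z : Y) = f z :=
  ⟨(hK.isEmbedding hf.domRestrict).toHomeomorph.trans (.setCongr (range_domRestrict f s)),
    fun _ => rfl⟩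

section Subordination

variable {μ μt : Measure ℝ} {t : ℝ} {ω : ℂ → ℂ} {z : ℂ}

lemma half_le_re_inv_one_sub {d : ℂ} (hd : ‖d‖ < 1) : 1 / 2 ≤ ((1 - d)⁻¹).re := by
  have hne : 1 - d ≠ 0 := fun h => by simp [← sub_eq_zero.1 h] at hd
  have hd2 : normSq d < 1 := by
    rw [normSq_eq_norm_sq]
    nlinarith [norm_nonneg d]
  rw [normSq_apply] at hd2
  rw [inv_re, le_div_iff₀ (normSq_pos.2 hne), normSq_apply]
  simp only [sub_re, one_re, sub_im, one_im]
  nlinarith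

lemma IsSubordT.eq_add_mul_nrT_sub (hω : IsSubordT μ t ω) (hz : z ∈ UHP) :
    ω z = z + (t - 1) * (nrT μ (ω z) - ω z) := by
  linear_combination hω.eqn z hz

lemma IsSubordT.half_le_re_deriv [IsProbabilityMeasure μ] (hω : IsSubordT μ t ω) (ht : 1 < t)
    (hz : z ∈ UHP) : 1 / 2 ≤ (deriv ω z).re := by
  set h : ℂ → ℂ := fun w => nrT μ w - w
  have hωz : ω z ∈ UHP := hω.maps z hz
  have hhd : DifferentiableOn ℂ h UHP := differentiableOn_nrT_UHP.sub differentiableOn_id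
  have hh_im : ∀ w ∈ UHP, 0 ≤ (h w).im := fun w hw => by
    simpa [h] using im_le_im_nrT (ν := μ) hw
  set d : ℂ := (t - 1) * deriv h (ω z)
  have hωd := (hω.diff.differentiableAt (isOpen_UHP.mem_nhds hz)).hasDerivAt
  have hfix : HasDerivAt ω (1 + d * deriv ω z) z := by
    have := (hasDerivAt_id' z).add (((hhd.differentiableAt (isOpen_UHP.mem_nhds hωz)).hasDerivAt
      |>.comp z hωd).const_mul ((t : ℂ) - 1))
    refine (this.congr_deriv (by ring)).congr_of_eventuallyEq ?_
    filter_upwards [isOpen_UHP.mem_nhds hz] with w hw using hω.eq_add_mul_nrT_sub hw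
  have hderiv : deriv ω z = (1 - d)⁻¹ :=
    eq_inv_of_mul_eq_one_left (by linear_combination hfix.deriv)
  have hd : ‖d‖ < 1 := by
    have him : (ω z).im = z.im + (t - 1) * (h (ω z)).im := by
      simpa [h] using congrArg im (hω.eq_add_mul_nrT_sub hz)
    have hSP := norm_deriv_mul_im_le_im hhd hh_im hωz
    have hnorm : ‖d‖ = (t - 1) * ‖deriv h (ω z)‖ := by
      rw [norm_mul, ← ofReal_one, ← ofReal_sub, norm_real, Real.norm_of_nonneg (by linarith)]
    rw [← mul_lt_mul_iff_left₀ (show 0 < (ω z).im from hωz), one_mul, hnorm, mul_assoc]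
    nlinarith [mul_le_mul_of_nonneg_left hSP (sub_nonneg.2 ht.le), show 0 < z.im from hz]
  rw [hderiv]
  exact half_le_re_inv_one_sub hd

lemma IsSubordT.half_mul_normSq_le_re_mul_conj [IsProbabilityMeasure μ] (hω : IsSubordT μ t ω)
    (ht : 1 < t) {w : ℂ} (hz : z ∈ CUHP) (hw : w ∈ CUHP) :
    1 / 2 * normSq (z - w) ≤ ((ω z - ω w) * conj (z - w)).re := by
  rw [← closure_UHP] at hz hw
  exact mul_normSq_le_re_mul_conj_of_mem_closure (convex_halfSpace_im_gt 0) isOpen_UHP hω.diff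
    (fun _ hz => hω.half_le_re_deriv ht hz) (closure_UHP ▸ hω.cont) hz hw

lemma IsSubordT.antilipschitzWith [IsProbabilityMeasure μ] (hω : IsSubordT μ t ω) (ht : 1 < t) :
    AntilipschitzWith 2 (CUHP.domRestrict ω) := by
  refine AntilipschitzWith.of_le_mul_dist fun z w => ?_
  have := mul_norm_sub_le_of_le_re_mul_conj (hω.half_mul_normSq_le_re_mul_conj ht z.2 w.2)
  simp only [Subtype.dist_eq, dist_eq_norm, domRestrict_apply, NNReal.coe_ofNat]
  linarith

noncomputable def subordOfFreePow (μt : Measure ℝ) (t : ℝ) (z : ℂ) : ℂ :=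
  (z + (t - 1) * nrT μt z) / t

lemma IsSubordT.stT_mul_sub_eq_of_mem_UHP [IsProbabilityMeasure μ] (hω : IsSubordT μ t ω)
    (hμt : IsFreePow μ ω μt) (hz : z ∈ UHP) : stT μt z * (z - t * ω z) = t - 1 := by
  have hm : stT μt z ≠ 0 := hμt.2 z hz ▸ stT_ne_zero (hω.maps z hz)
  have heqn := hω.eqn z hz
  rw [nrT, ← hμt.2 z hz] at heqn
  have : stT μt z * (t * ω z - z) = -(t - 1) := by rw [heqn]; field_simp
  linear_combination -this

lemma IsSubordT.stT_mul_sub_eq [IsProbabilityMeasure μ] [IsFiniteMeasure μt]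
    (hω : IsSubordT μ t ω) (hμt : IsFreePow μ ω μt) :
    EqOn (fun z => stT μt z * (z - t * ω z)) (fun _ => (t : ℂ) - 1) (CUHP \ complexSupp μt) := by
  refine EqOn.of_subset_closure (fun z hz => hω.stT_mul_sub_eq_of_mem_UHP hμt hz)
    (fun w hw => ((analyticAt_stT hw.2).continuousAt.continuousWithinAt).mul
      (continuousWithinAt_id.sub (continuousWithinAt_const.mul (hω.cont.mono sdiff_subset w hw))))
    continuousOn_const (fun z hz => ⟨UHP_subset_CUHP hz, fun h => hz.ne' h.1⟩) ?_
  exact closure_UHP ▸ sdiff_subset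

lemma IsSubordT.stT_ne_zero_of_mem_CUHP_diff [IsProbabilityMeasure μ] [IsFiniteMeasure μt]
    (hω : IsSubordT μ t ω) (ht : 1 < t) (hμt : IsFreePow μ ω μt) (hz : z ∈ CUHP \ complexSupp μt) :
    stT μt z ≠ 0 := by
  have h : stT μt z * (z - t * ω z) = t - 1 := hω.stT_mul_sub_eq hμt hz
  refine left_ne_zero_of_mul (b := z - t * ω z) ?_
  rw [h, sub_ne_zero, ← ofReal_one, Ne, ofReal_inj]
  exact ht.ne'

lemma IsSubordT.analyticAt_subordOfFreePow [IsProbabilityMeasure μ] [IsFiniteMeasure μt]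
    (hω : IsSubordT μ t ω) (ht : 1 < t) (hμt : IsFreePow μ ω μt)
    (hz : z ∈ CUHP \ complexSupp μt) : AnalyticAt ℂ (subordOfFreePow μt t) z :=
  (analyticAt_id.add (analyticAt_const.mul ((analyticAt_stT hz.2).inv
    (hω.stT_ne_zero_of_mem_CUHP_diff ht hμt hz)).neg)).div_const

lemma IsSubordT.eqOn_subordOfFreePow [IsProbabilityMeasure μ] [IsFiniteMeasure μt]
    (hω : IsSubordT μ t ω) (ht : 1 < t) (hμt : IsFreePow μ ω μt) :
    EqOn (subordOfFreePow μt t) ω (CUHP \ complexSupp μt) := fun z hz => by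
  have hm := hω.stT_ne_zero_of_mem_CUHP_diff ht hμt hz
  have ht0 : (t : ℂ) ≠ 0 := ofReal_ne_zero.2 (by linarith)
  have h : stT μt z * (z - t * ω z) = t - 1 := hω.stT_mul_sub_eq hμt hz
  rw [subordOfFreePow, nrT, div_eq_iff ht0]
  field_simp
  linear_combination h

end Subordination

/-- Monotonicity and injectivity properties of `ω_t`. -/
theorem subordination_homeomorphism
    (μ : Measure ℝ) (nac npp nppout : ℕ)
    (Em Ep : Fin nac → ℝ) (atom : Fin npp → ℝ) (ρ : ℝ → ℝ)
    (hμ : Assumption1 μ nac npp nppout Em Ep atom ρ)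
    (t : ℝ) (ht : 1 < t) (ω : ℂ → ℂ) (hω : IsSubordT μ t ω)
    (μt : Measure ℝ) (hμt : IsFreePow μ ω μt) :
    -- (i) Re ω_t'(z) ≥ 1/2 on ℂ⁺
    (∀ z ∈ UHP, (1 : ℝ) / 2 ≤ (deriv ω z).re) ∧
    -- (ii) E ↦ Re ω_t(E) is strictly increasing on ℝ
    StrictMono (fun E : ℝ => (ω (E : ℂ)).re) ∧
    -- (iii) ω_t is a homeomorphism from ℂ⁺ ∪ ℝ onto its image
    (∃ e : ↥CUHP ≃ₜ ↥(ω '' CUHP), ∀ z : ↥CUHP, (e z : ℂ) = ω (z : ℂ)) ∧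
    -- (iv) ω_t is biholomorphic on (ℂ⁺ ∪ ℝ) \ supp(μ^{⊞t}): it extends analytically
    -- through every real point outside supp(μ^{⊞t}) and is injective there
    (∃ g : ℂ → ℂ,
      (∀ w ∈ CUHP \ {z : ℂ | z.im = 0 ∧ z.re ∈ msupp μt}, AnalyticAt ℂ g w) ∧
      Set.EqOn g ω (CUHP \ {z : ℂ | z.im = 0 ∧ z.re ∈ msupp μt}) ∧
      Set.InjOn g (CUHP \ {z : ℂ | z.im = 0 ∧ z.re ∈ msupp μt})) := by
  have := hμ.prob
  have := hμt.1
  have hreal : ∀ E : ℝ, (E : ℂ) ∈ CUHP := fun E => show (0 : ℝ) ≤ (E : ℂ).im by simp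
  have hinj : InjOn ω CUHP := injOn_iff_injective.2 (hω.antilipschitzWith ht).injective
  have hEq := hω.eqOn_subordOfFreePow ht hμt
  refine ⟨fun z hz => hω.half_le_re_deriv ht hz,
    strictMono_re_of_le_re_mul_conj one_half_pos fun E E' =>
      hω.half_mul_normSq_le_re_mul_conj ht (hreal E') (hreal E),
    exists_homeomorph_image_of_antilipschitzWith hω.cont (hω.antilipschitzWith ht),
    subordOfFreePow μt t, fun w hw => hω.analyticAt_subordOfFreePow ht hμt hw, hEq,
    (hinj.mono sdiff_subset).congr hEq.symm⟩
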